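/- The aorta A, the attractor of the IFS {f₁,f₂,f₃} with contraction ratio 1/√5, contains the three control points (0,0), (-0.5,0), and (0,0.5). -/
import Mathlib

noncomputable def pt (a b : ℝ) : EuclideanSpace ℝ (Fin 2) :=
  (WithLp.equiv 2 (Fin 2 → ℝ)).symm ![a, b]

noncomputable def coord (p : EuclideanSpace ℝ (Fin 2)) (i : Fin 2) : ℝ :=
  (WithLp.equiv 2 (Fin 2 → ℝ)) p i

/-- Multiplication by `M_P⁻¹ = (1/5)·[[2,-1],[1,2]]`. -/
noncomputable def Minv (p : EuclideanSpace ℝ (Fin 2)) : EuclideanSpace ℝ (Fin 2) :=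
  pt ((2 * coord p 0 - coord p 1) / 5) ((coord p 0 + 2 * coord p 1) / 5)

/-- Reflection across the `y`-axis. -/
noncomputable def Ry (p : EuclideanSpace ℝ (Fin 2)) : EuclideanSpace ℝ (Fin 2) :=
  pt (-(coord p 0)) (coord p 1)

/-- Rotation by `π`. -/
noncomputable def Rpi (p : EuclideanSpace ℝ (Fin 2)) : EuclideanSpace ℝ (Fin 2) :=
  pt (-(coord p 0)) (-(coord p 1))

/-- The first IFS map: `f₁(x,y) = M_P⁻¹·R_y(x,y) + (-0.4,-0.2)`. -/
noncomputable def f₁ (p : EuclideanSpace ℝ (Fin 2)) : EuclideanSpace ℝ (Fin 2) :=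
  Minv (Ry p) + pt (-0.4) (-0.2)

/-- The second IFS map: `f₂(x,y) = M_P⁻¹(x,y)`. -/
noncomputable def f₂ (p : EuclideanSpace ℝ (Fin 2)) : EuclideanSpace ℝ (Fin 2) :=
  Minv p

/-- The third IFS map: `f₃(x,y) = R_π·M_P⁻¹(x,y) + (-0.2,0.4)`. -/
noncomputable def f₃ (p : EuclideanSpace ℝ (Fin 2)) : EuclideanSpace ℝ (Fin 2) :=
  Rpi (Minv p) + pt (-0.2) 0.4

lemma coord_pt (a b : ℝ) : coord (pt a b) 0 = a ∧ coord (pt a b) 1 = b := by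
  constructor <;> simp [pt, coord]

lemma coord_add (p q : EuclideanSpace ℝ (Fin 2)) (i : Fin 2) :
    coord (p + q) i = coord p i + coord q i := rfl

lemma dist_coord (p q : EuclideanSpace ℝ (Fin 2)) :
    dist p q = Real.sqrt ((coord p 0 - coord q 0)^2 + (coord p 1 - coord q 1)^2) := by
  rw [EuclideanSpace.dist_eq, Fin.sum_univ_two]
  simp [coord, Real.dist_eq, sq_abs]

lemma ext_pt (p : EuclideanSpace ℝ (Fin 2)) (a b : ℝ)
    (h0 : coord p 0 = a) (h1 : coord p 1 = b) : p = pt a b := by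
  apply (WithLp.equiv 2 (Fin 2 → ℝ)).injective
  funext i
  fin_cases i
  · simpa [coord, pt] using h0
  · simpa [coord, pt] using h1

/-- distance contracts by (at most) 1/2 under `Minv`. -/
lemma dist_Minv (p q : EuclideanSpace ℝ (Fin 2)) :
    dist (Minv p) (Minv q) ≤ (1/2) * dist p q := by
  rw [dist_coord, dist_coord]
  set x := coord p 0 - coord q 0
  set y := coord p 1 - coord q 1
  have h0 : coord (Minv p) 0 - coord (Minv q) 0 = (2*x - y)/5 := by
    simp [Minv, (coord_pt _ _).1, x, y]; ring
  have h1 : coord (Minv p) 1 - coord (Minv q) 1 = (x + 2*y)/5 := by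
    simp [Minv, (coord_pt _ _).2, x, y]; ring
  rw [h0, h1]
  have e : (1/2 : ℝ) * Real.sqrt (x^2 + y^2) = Real.sqrt ((x^2+y^2)/4) := by
    rw [show ((x^2+y^2)/4 : ℝ) = (1/2)^2 * (x^2+y^2) by ring,
      Real.sqrt_mul (by positivity), Real.sqrt_sq (by norm_num)]
  rw [e]
  apply Real.sqrt_le_sqrt
  nlinarith [sq_nonneg x, sq_nonneg y]

lemma dist_Ry (p q : EuclideanSpace ℝ (Fin 2)) : dist (Ry p) (Ry q) = dist p q := by
  rw [dist_coord, dist_coord]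
  simp only [Ry, (coord_pt _ _).1, (coord_pt _ _).2]
  ring_nf

lemma dist_f₁ (p q : EuclideanSpace ℝ (Fin 2)) :
    dist (f₁ p) (f₁ q) ≤ (1/2) * dist p q := by
  unfold f₁
  rw [dist_add_right, ← dist_Ry p q]
  exact dist_Minv _ _

lemma dist_f₃ (p q : EuclideanSpace ℝ (Fin 2)) :
    dist (f₃ p) (f₃ q) ≤ (1/2) * dist p q := by
  unfold f₃
  rw [dist_add_right]
  have e : dist (Rpi (Minv p)) (Rpi (Minv q)) = dist (Minv p) (Minv q) := by
    rw [dist_coord, dist_coord]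
    simp only [Rpi, (coord_pt _ _).1, (coord_pt _ _).2]
    ring_nf
  rw [e]
  exact dist_Minv _ _

lemma fixed_mem {g : EuclideanSpace ℝ (Fin 2) → EuclideanSpace ℝ (Fin 2)}
    {A : Set (EuclideanSpace ℝ (Fin 2))} (hc : IsCompact A) (hne : A.Nonempty)
    (hmaps : Set.MapsTo g A A)
    (hg : ∀ p q, dist (g p) (g q) ≤ (1/2) * dist p q)
    {x : EuclideanSpace ℝ (Fin 2)} (hx : g x = x) : x ∈ A := by
  obtain ⟨a, haA, ha⟩ := hc.exists_isMinOn (f := fun p => dist p x) hne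
    ((continuous_id.dist continuous_const).continuousOn)
  have h1 : dist a x ≤ dist (g a) x := ha (hmaps haA)
  have h2 : dist (g a) x ≤ (1/2) * dist a x := by
    calc dist (g a) x = dist (g a) (g x) := by rw [hx]
      _ ≤ (1/2) * dist a x := hg a x
  have h3 : dist a x = 0 := le_antisymm (by linarith) dist_nonneg
  rw [show x = a from (dist_eq_zero.mp h3).symm]
  exact haA

/-- The aorta (any nonempty compact set invariant under the IFS `{f₁,f₂,f₃}`,
which is unique) contains the three control points `(0,0)`, `(-0.5,0)` and `(0,0.5)`. -/
theorem aorta_contains_control_points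
    (A : Set (EuclideanSpace ℝ (Fin 2))) (hne : A.Nonempty) (hc : IsCompact A)
    (hinv : A = f₁ '' A ∪ f₂ '' A ∪ f₃ '' A) :
    pt 0 0 ∈ A ∧ pt (-0.5) 0 ∈ A ∧ pt 0 0.5 ∈ A := by
  have hf1 : ∀ p ∈ A, f₁ p ∈ A := fun p hp => by
    rw [hinv]; exact Or.inl (Or.inl ⟨p, hp, rfl⟩)
  have hf2 : ∀ p ∈ A, f₂ p ∈ A := fun p hp => by
    rw [hinv]; exact Or.inl (Or.inr ⟨p, hp, rfl⟩)
  have hf3 : ∀ p ∈ A, f₃ p ∈ A := fun p hp => by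
    rw [hinv]; exact Or.inr ⟨p, hp, rfl⟩
  have e31 : f₃ (pt (-0.5) 0) = pt 0 0.5 := by
    apply ext_pt <;>
      simp only [f₃, Rpi, Minv, coord_add, (coord_pt _ _).1, (coord_pt _ _).2] <;> norm_num
  have e13 : f₁ (pt 0 0.5) = pt (-0.5) 0 := by
    apply ext_pt <;>
      simp only [f₁, Ry, Minv, coord_add, (coord_pt _ _).1, (coord_pt _ _).2] <;> norm_num
  have h0 : pt 0 0 ∈ A := by
    apply fixed_mem hc hne hf2 (fun p q => dist_Minv p q)
    apply ext_pt <;>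
      simp only [f₂, Minv, (coord_pt _ _).1, (coord_pt _ _).2] <;> norm_num
  have h1 : pt (-0.5) 0 ∈ A := by
    apply fixed_mem hc hne (g := f₁ ∘ f₃) (fun p hp => hf1 _ (hf3 p hp))
    · intro p q
      calc dist (f₁ (f₃ p)) (f₁ (f₃ q)) ≤ (1/2) * dist (f₃ p) (f₃ q) := dist_f₁ _ _
        _ ≤ (1/2) * ((1/2) * dist p q) := by linarith [dist_f₃ p q]
        _ ≤ (1/2) * dist p q := by nlinarith [dist_nonneg (x := p) (y := q)]
    · show f₁ (f₃ (pt (-0.5) 0)) = pt (-0.5) 0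
      rw [e31, e13]
  exact ⟨h0, h1, e31 ▸ hf3 _ h1⟩
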